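/- Let ε ∈ ℝ, Δτ ≠ 0, and assume the linear instability condition: ε < 0 or ε > 2/(π(Δτ)²). Let t, t' ∈ ℝ with cos(πt) ≠ 0 and cos(πt') ≠ 0, and let a = (a₁, a₂) ∈ ℝ² lie in the stable cone at t (i.e., a₂ ≠ 0 and: a₁/a₂ < α(t) when ε > 2/(π(Δτ)²); a₁/a₂ > α(t) when ε < 0). Then the preimage b = J̃(t')⁻¹·a = (2α(t')a₁ − a₂, a₁) satisfies b₂ ≠ 0 and b lies in the stable cone at t' (i.e., b₁/b₂ < α(t') when ε > 2/(π(Δτ)²), and b₁/b₂ > α(t') when ε < 0); i.e., the inverse Jacobian maps the stable cone at t into the stable cone at any point t'. -/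
import Mathlib


/-- `α(t) = 1 − πε(Δτ)²/cos²(πt)`. -/
noncomputable def alphaT (ε Δτ t : ℝ) : ℝ :=
  1 - Real.pi * ε * Δτ ^ 2 / Real.cos (Real.pi * t) ^ 2

/-- The stable cone at `t`: vectors `(a₁,a₂)` with `a₂ ≠ 0` and `a₁/a₂ < α(t)`
when `ε > 2/(π(Δτ)²)`, resp. `a₁/a₂ > α(t)` when `ε < 0`. -/
noncomputable def stableCone (ε Δτ t : ℝ) : Set (ℝ × ℝ) :=
  {a : ℝ × ℝ | a.2 ≠ 0 ∧
    (ε > 2 / (Real.pi * Δτ ^ 2) → a.1 / a.2 < alphaT ε Δτ t) ∧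
    (ε < 0 → a.1 / a.2 > alphaT ε Δτ t)}

lemma alphaT_lt_neg_one (ε Δτ t : ℝ) (hΔτ : Δτ ≠ 0)
    (hε : ε > 2 / (Real.pi * Δτ ^ 2)) (ht : Real.cos (Real.pi * t) ≠ 0) :
    alphaT ε Δτ t < -1 := by
  have hπ := Real.pi_pos
  have hΔ : (0:ℝ) < Δτ ^ 2 := by positivity
  have hc : (0:ℝ) < Real.cos (Real.pi * t) ^ 2 := by positivity
  have hc1 : Real.cos (Real.pi * t) ^ 2 ≤ 1 := by
    nlinarith [Real.neg_one_le_cos (Real.pi * t), Real.cos_le_one (Real.pi * t)]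
  have h2 : 2 < Real.pi * ε * Δτ ^ 2 := by
    rw [gt_iff_lt, div_lt_iff₀ (by positivity)] at hε
    nlinarith
  have : 2 < Real.pi * ε * Δτ ^ 2 / Real.cos (Real.pi * t) ^ 2 := by
    rw [lt_div_iff₀ hc]; nlinarith
  unfold alphaT; linarith

lemma alphaT_gt_one (ε Δτ t : ℝ) (hΔτ : Δτ ≠ 0) (hε : ε < 0)
    (ht : Real.cos (Real.pi * t) ≠ 0) :
    1 < alphaT ε Δτ t := by
  have hπ := Real.pi_pos
  have hc : (0:ℝ) < Real.cos (Real.pi * t) ^ 2 := by positivity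
  have hΔ : (0:ℝ) < Δτ ^ 2 := by positivity
  have hnum : Real.pi * ε * Δτ ^ 2 < 0 := by nlinarith [mul_pos hπ hΔ]
  have := div_neg_of_neg_of_pos hnum hc
  unfold alphaT; linarith

/-- Under the linear instability condition, the inverse Jacobian
`J̃(t')⁻¹·a = (2α(t')a₁ − a₂, a₁)` maps the stable cone at `t` into the stable
cone at any regular point `t'`. -/
theorem stable_cone_invariant (ε Δτ : ℝ) (hΔτ : Δτ ≠ 0)
    (hli : ε < 0 ∨ ε > 2 / (Real.pi * Δτ ^ 2))
    (t t' : ℝ) (ht : Real.cos (Real.pi * t) ≠ 0) (ht' : Real.cos (Real.pi * t') ≠ 0)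
    (a : ℝ × ℝ) (ha : a ∈ stableCone ε Δτ t) :
    a.1 ≠ 0 ∧
    (2 * alphaT ε Δτ t' * a.1 - a.2, a.1) ∈ stableCone ε Δτ t' := by
  obtain ⟨h2, hgt, hlt⟩ := ha
  have hπ := Real.pi_pos
  have hbpos : 0 < 2 / (Real.pi * Δτ ^ 2) := by positivity
  rcases hli with hε | hε
  · -- ε < 0 : α > 1 everywhere
    have hαt := alphaT_gt_one ε Δτ t hΔτ hε ht
    have hαt' := alphaT_gt_one ε Δτ t' hΔτ hε ht'
    have hr : a.1 / a.2 > alphaT ε Δτ t := hlt hε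
    have ha1 : a.1 ≠ 0 := by
      intro h; rw [h, zero_div] at hr; linarith
    refine ⟨ha1, ha1, fun h => absurd h (by linarith), fun _ => ?_⟩
    have hinv : a.2 / a.1 = (a.1 / a.2)⁻¹ := by rw [inv_div]
    have hrpos : 0 < a.1 / a.2 := by linarith
    have h1 : (a.1 / a.2)⁻¹ < 1 := inv_lt_one_of_one_lt₀ (by linarith)
    have hkey : (2 * alphaT ε Δτ t' * a.1 - a.2) / a.1
        = 2 * alphaT ε Δτ t' - a.2 / a.1 := by
      rw [sub_div, mul_div_assoc, div_self ha1, mul_one]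
    simp only [hkey, hinv, gt_iff_lt]
    linarith
  · -- ε > 2/(πΔτ²) : α < −1 everywhere
    have hαt := alphaT_lt_neg_one ε Δτ t hΔτ hε ht
    have hαt' := alphaT_lt_neg_one ε Δτ t' hΔτ hε ht'
    have hr : a.1 / a.2 < alphaT ε Δτ t := hgt hε
    have ha1 : a.1 ≠ 0 := by
      intro h; rw [h, zero_div] at hr; linarith
    refine ⟨ha1, ha1, fun _ => ?_, fun h => absurd h (by linarith)⟩
    have hinv : a.2 / a.1 = (a.1 / a.2)⁻¹ := by rw [inv_div]
    have hrneg : a.1 / a.2 < -1 := by linarith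
    have hr0 : a.1 / a.2 ≠ 0 := by intro h; rw [h] at hrneg; linarith
    have hmul : (a.1 / a.2) * (a.1 / a.2)⁻¹ = 1 := mul_inv_cancel₀ hr0
    have hipos : (a.1 / a.2)⁻¹ < 0 := by nlinarith
    have h1 : -1 < (a.1 / a.2)⁻¹ := by nlinarith
    have hkey : (2 * alphaT ε Δτ t' * a.1 - a.2) / a.1
        = 2 * alphaT ε Δτ t' - a.2 / a.1 := by
      rw [sub_div, mul_div_assoc, div_self ha1, mul_one]
    simp only [hkey, hinv]
    linarith
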